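/- arXiv:2412.06990 — 3 statements merged into one kernel-verified Lean document; each statement's English description precedes it below -/
import Mathlib

section
/- For any integer T > 1 and any real δ with 0 < δ ≤ 1/√T, for every vector x ∈ ℝ^T it holds that δ·x₁ - sqrt( Σ_{j=1}^{T-1} (x_{j+1} - x_j)² + x_T² ) ≤ 0. -/
/-!
Extend `x` by `x (T + 1) = 0`. The quantity under the square root is then the sum of the `T`
squared differences of the extended sequence, whose plain differences telescope to `x 1`; by
Cauchy–Schwarz, `x 1 ≤ √T · √(∑ …)`, and `δ √T ≤ 1`.
-/

open Finset

theorem sum_Icc_sub_telescope (y : ℕ → ℝ) (n : ℕ) :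
    ∑ j ∈ Icc 1 n, (y j - y (j + 1)) = y 1 - y (n + 1) := by
  induction n with
  | zero => simp
  | succ n ih =>
    rw [sum_Icc_succ_top (by omega), ih]
    ring

theorem sum_le_sqrt_card_mul_sqrt_sum_sq {ι : Type*} (s : Finset ι) (f : ι → ℝ) :
    ∑ i ∈ s, f i ≤ √(#s) * √(∑ i ∈ s, f i ^ 2) := by
  rw [← Real.sqrt_mul (by positivity)]
  exact Real.le_sqrt_of_sq_le sq_sum_le_card_mul_sum_sq

theorem sub_le_sqrt_mul_sqrt_sum_sq_sub (y : ℕ → ℝ) (n : ℕ) :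
    y 1 - y (n + 1) ≤ √n * √(∑ j ∈ Icc 1 n, (y (j + 1) - y j) ^ 2) := by
  have h := sum_le_sqrt_card_mul_sqrt_sum_sq (Icc 1 n) (fun j => y j - y (j + 1))
  rwa [sum_Icc_sub_telescope, Nat.card_Icc, add_tsub_cancel_right,
    sum_congr rfl fun j _ => sub_sq_comm (y j) (y (j + 1))] at h

theorem stmt_0 (T : ℕ) (hT : 1 < T) (δ : ℝ) (hδ0 : 0 < δ)
    (hδ : δ ≤ 1 / Real.sqrt T) (x : ℕ → ℝ) :
    δ * x 1 - Real.sqrt ((∑ j ∈ Finset.Icc 1 (T - 1), (x (j + 1) - x j) ^ 2) + x T ^ 2) ≤ 0 := by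
  obtain ⟨n, rfl⟩ : ∃ n, T = n + 1 := ⟨T - 1, by omega⟩
  set y : ℕ → ℝ := fun j => if j ≤ n + 1 then x j else 0
  have hsum : ∑ j ∈ Icc 1 (n + 1), (y (j + 1) - y j) ^ 2
      = ∑ j ∈ Icc 1 (n + 1 - 1), (x (j + 1) - x j) ^ 2 + x (n + 1) ^ 2 := by
    rw [sum_Icc_succ_top (by omega), add_tsub_cancel_right]
    congr 1
    · refine sum_congr rfl fun j hj => ?_
      simp only [mem_Icc] at hj
      simp only [y, if_pos (by omega : j ≤ n + 1), if_pos (by omega : j + 1 ≤ n + 1)]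
    · simp [y]
  have hx := sub_le_sqrt_mul_sqrt_sum_sq_sub y (n + 1)
  rw [hsum] at hx
  simp only [y, if_pos (by omega : 1 ≤ n + 1), if_neg (by omega : ¬n + 1 + 1 ≤ n + 1),
    sub_zero] at hx
  have hδT : δ * √(↑(n + 1)) ≤ 1 := by
    rwa [le_div_iff₀ (by positivity)] at hδ
  rw [sub_nonpos]
  calc δ * x 1 ≤ δ * (√(↑(n + 1)) * _) := mul_le_mul_of_nonneg_left hx hδ0.le
    _ ≤ _ := by rw [← mul_assoc]; exact mul_le_of_le_one_left (by positivity) hδT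
end

section
/- Let T > 1 and 0 < δ ≤ 1/√T. Define the symmetric T×T tridiagonal matrix M with M₁₁ = 1, M_{jj} = 2 for 2 ≤ j ≤ T, M_{j,j+1} = M_{j+1,j} = -1, and all other entries 0. Then the matrix M - δ²·e₁e₁ᵀ is positive semidefinite, where e₁ is the first standard basis vector. -/
/-!
Let `D` be the upper bidiagonal difference matrix (`1` on the diagonal, `-1` just above it). Then
`M = DᵀD`, and since the columns of `D` sum to `e₁`, also `e₁e₁ᵀ = Dᵀ𝟙𝟙ᵀD` with `𝟙` the all-ones
vector. Hence `M - δ²e₁e₁ᵀ = Dᵀ(1 - δ²𝟙𝟙ᵀ)D`, and `1 - δ²𝟙𝟙ᵀ` is positive semidefinite because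
`(𝟙 ⬝ x)² ≤ T ‖x‖²` by Cauchy–Schwarz and `δ²T ≤ 1`.
-/

open Matrix

def diffMatrix (R : Type*) [Ring R] (n : ℕ) : Matrix (Fin n) (Fin n) R :=
  of fun i j => if i = j then 1 else if (i : ℕ) + 1 = j then -1 else 0

section diffMatrix

variable {R : Type*} [Ring R] {n : ℕ}

lemma Fin.sum_ite_val_add_one_eq (f : Fin n → R) (i : Fin n) :
    ∑ k : Fin n, (if (k : ℕ) + 1 = i then f k else 0) =
      if h : (i : ℕ) = 0 then 0 else f ⟨i - 1, by omega⟩ := by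
  split_ifs with h
  · exact Finset.sum_eq_zero fun k _ => if_neg (by omega)
  · rw [Finset.sum_eq_single_of_mem ⟨i - 1, by omega⟩ (Finset.mem_univ _) fun k _ hk => if_neg ?_]
    · simp only [if_pos (by omega : (i : ℕ) - 1 + 1 = i)]
    · exact fun hk' => hk (Fin.ext (by simp only; omega))

lemma diffMatrix_apply_eq_sub (k j : Fin n) :
    diffMatrix R n k j = (if k = j then 1 else 0) - (if (k : ℕ) + 1 = j then 1 else 0) := by
  simp only [diffMatrix, of_apply, Fin.ext_iff]
  split_ifs <;> first | omega | simp

lemma diffMatrix_apply_mul (i j k : Fin n) :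
    diffMatrix R n k i * diffMatrix R n k j =
      (if k = i then diffMatrix R n i j else 0) -
        (if (k : ℕ) + 1 = i then diffMatrix R n k j else 0) := by
  rw [diffMatrix_apply_eq_sub k i]
  split_ifs <;> simp_all

lemma diffMatrix_transpose_mul_self_apply (i j : Fin n) :
    ((diffMatrix R n)ᵀ * diffMatrix R n) i j =
      if i = j then (if (i : ℕ) = 0 then 1 else 2)
      else if (i : ℕ) + 1 = j ∨ (j : ℕ) + 1 = i then -1 else 0 := by
  simp only [mul_apply, transpose_apply, diffMatrix_apply_mul, Finset.sum_sub_distrib,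
    Finset.sum_ite_eq', Finset.mem_univ, if_true, Fin.sum_ite_val_add_one_eq]
  simp only [diffMatrix, of_apply, Fin.ext_iff]
  split_ifs <;> first | omega | norm_num

lemma one_vecMul_diffMatrix :
    (1 : Fin n → R) ᵥ* diffMatrix R n = fun j : Fin n => if (j : ℕ) = 0 then (1 : R) else 0 := by
  ext j
  simp only [vecMul, dotProduct, Pi.one_apply, one_mul, diffMatrix_apply_eq_sub,
    Finset.sum_sub_distrib, Finset.sum_ite_eq', Finset.mem_univ, if_true,
    Fin.sum_ite_val_add_one_eq]
  split_ifs <;> simp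

end diffMatrix

lemma posSemidef_one_sub_smul_vecMulVec_self {m : Type*} [Fintype m] [DecidableEq m]
    (u : m → ℝ) {c : ℝ} (hc : c * (u ⬝ᵥ u) ≤ 1) : (1 - c • vecMulVec u u).PosSemidef := by
  rw [posSemidef_iff_dotProduct_mulVec]
  refine ⟨?_, fun x => ?_⟩
  · ext i j
    simp [vecMulVec_apply, one_apply, eq_comm, mul_comm]
  · have cauchySchwarz : (u ⬝ᵥ x) ^ 2 ≤ (u ⬝ᵥ u) * (x ⬝ᵥ x) := by
      simpa only [dotProduct, sq] using Finset.sum_mul_sq_le_sq_mul_sq Finset.univ u x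
    have hx : 0 ≤ x ⬝ᵥ x := by simpa using dotProduct_star_self_nonneg x
    simp only [star_trivial, sub_mulVec, one_mulVec, smul_mulVec, vecMulVec_mulVec,
      dotProduct_sub, dotProduct_smul, op_smul_eq_mul, smul_eq_mul, dotProduct_comm x u]
    rcases le_or_gt c 0 with hc0 | hc0 <;> nlinarith

lemma sq_mul_le_one_of_le_one_div_sqrt {δ t : ℝ} (hδ0 : 0 ≤ δ) (ht : 0 ≤ t)
    (hδ : δ ≤ 1 / Real.sqrt t) : δ ^ 2 * t ≤ 1 := by
  calc δ ^ 2 * t = (δ * Real.sqrt t) ^ 2 := by rw [mul_pow, Real.sq_sqrt ht]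
    _ ≤ 1 := pow_le_one₀ (by positivity) (mul_le_of_le_div₀ zero_le_one (Real.sqrt_nonneg t) hδ)

theorem stmt_1_general (T : ℕ) (δ : ℝ) (hδ0 : 0 < δ) (hδ : δ ≤ 1 / Real.sqrt T)
    (M E : Matrix (Fin T) (Fin T) ℝ)
    (hM : ∀ i j : Fin T, M i j =
      if i = j then (if (i : ℕ) = 0 then 1 else 2)
      else if (i : ℕ) + 1 = (j : ℕ) ∨ (j : ℕ) + 1 = (i : ℕ) then -1 else 0)
    (hE : ∀ i j : Fin T, E i j = if (i : ℕ) = 0 ∧ (j : ℕ) = 0 then 1 else 0) :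
    (M - δ ^ 2 • E).PosSemidef := by
  set D := diffMatrix ℝ T
  have hMD : M = Dᵀ * D := by
    ext i j
    rw [hM, diffMatrix_transpose_mul_self_apply]
  have hED : E = Dᵀ * vecMulVec 1 1 * D := by
    ext i j
    rw [mul_vecMulVec, vecMulVec_mul, mulVec_transpose, one_vecMul_diffMatrix, hE]
    simp only [vecMulVec_apply, ite_mul, one_mul, zero_mul, ite_and]
  have hfactor : M - δ ^ 2 • E = Dᴴ * (1 - δ ^ 2 • vecMulVec 1 1) * D := by
    rw [conjTranspose_eq_transpose_of_trivial, hMD, hED]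
    simp only [mul_sub, sub_mul, mul_one, Matrix.mul_smul, Matrix.smul_mul, Matrix.mul_assoc]
  have hδT : δ ^ 2 * ((1 : Fin T → ℝ) ⬝ᵥ 1) ≤ 1 := by
    simpa using sq_mul_le_one_of_le_one_div_sqrt hδ0.le (Nat.cast_nonneg T) hδ
  rw [hfactor]
  exact (posSemidef_one_sub_smul_vecMulVec_self 1 hδT).conjTranspose_mul_mul_same D

theorem stmt_1 (T : ℕ) (hT : 1 < T) (δ : ℝ) (hδ0 : 0 < δ) (hδ : δ ≤ 1 / Real.sqrt T)
    (M E : Matrix (Fin T) (Fin T) ℝ)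
    (hM : ∀ i j : Fin T, M i j =
      if i = j then (if (i : ℕ) = 0 then 1 else 2)
      else if (i : ℕ) + 1 = (j : ℕ) ∨ (j : ℕ) + 1 = (i : ℕ) then -1 else 0)
    (hE : ∀ i j : Fin T, E i j = if (i : ℕ) = 0 ∧ (j : ℕ) = 0 then 1 else 0) :
    (M - δ ^ 2 • E).PosSemidef :=
  stmt_1_general T δ hδ0 hδ M E hM hE
end

section
/- Let u₁,…,u_{T+1} ∈ ℝ^d be orthonormal vectors and v₀,…,v_T ∈ ℝ^n arbitrary vectors with v₀ = α·𝟙 (the all-ones vector scaled by α > 0). Define A = Σ_{j=1}^{T} (v_{j-1} - v_j)u_jᵀ + v_T u_{T+1}ᵀ. Then for w = (1/√(T+1)) Σ_{t=1}^{T+1} u_t, we have ‖w‖₂ = 1 and Aw = (α/√(T+1))·𝟙; consequently max over unit vectors w of min over p ∈ Δ^{n-1} of pᵀAw is at least α/√(T+1). -/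
/-!
Orthonormality makes `w` the normalised sum of `T + 1` unit vectors, so `‖w‖ = 1`, and gives
`u j ⬝ᵥ w = 1 / √(T + 1)` for every `j`. Each row of `A` is a combination of the `u j` whose
coefficients telescope to `v 0 l = α`, hence `A w = (α / √(T + 1)) 𝟙`, and `pᵀ A w = α / √(T + 1)`
for every probability vector `p`.
-/

open Matrix Finset

lemma sum_Icc_one_sub_telescope (f : ℕ → ℝ) (T : ℕ) :
    ∑ j ∈ Icc 1 T, (f (j - 1) - f j) = f 0 - f T := by
  induction T with
  | zero => simp
  | succ T ih =>
    rw [sum_Icc_succ_top (by omega), ih]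
    simp

section Orthonormal

variable {ι m : Type*} [DecidableEq ι] [Fintype m] {u : ι → m → ℝ} {S : Finset ι}

lemma dotProduct_sum_of_orthonormal
    (hu : ∀ j ∈ S, ∀ k ∈ S, u j ⬝ᵥ u k = if j = k then 1 else 0) {j : ι} (hj : j ∈ S) :
    u j ⬝ᵥ ∑ t ∈ S, u t = 1 := by
  rw [dotProduct_sum, sum_congr rfl (hu j hj), sum_ite_eq, if_pos hj]

lemma sum_dotProduct_sum_of_orthonormal
    (hu : ∀ j ∈ S, ∀ k ∈ S, u j ⬝ᵥ u k = if j = k then 1 else 0) :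
    (∑ t ∈ S, u t) ⬝ᵥ ∑ t ∈ S, u t = #S := by
  rw [sum_dotProduct, sum_congr rfl fun j hj => dotProduct_sum_of_orthonormal hu hj]
  simp

end Orthonormal

lemma telescoping_combination_dotProduct_sum {m : Type*} [Fintype m] {T : ℕ}
    {u : ℕ → m → ℝ}
    (hu : ∀ j ∈ Icc 1 (T + 1), ∀ k ∈ Icc 1 (T + 1), u j ⬝ᵥ u k = if j = k then 1 else 0)
    (f : ℕ → ℝ) :
    (∑ j ∈ Icc 1 T, (f (j - 1) - f j) • u j + f T • u (T + 1)) ⬝ᵥ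
      ∑ t ∈ Icc 1 (T + 1), u t = f 0 := by
  have hsum : ∀ j ∈ Icc 1 (T + 1), u j ⬝ᵥ ∑ t ∈ Icc 1 (T + 1), u t = 1 :=
    fun j hj => dotProduct_sum_of_orthonormal hu hj
  rw [add_dotProduct, sum_dotProduct, smul_dotProduct, hsum (T + 1) (by simp)]
  rw [sum_congr rfl fun j hj => by
    rw [smul_dotProduct, hsum j (Icc_subset_Icc_right (Nat.le_succ T) hj)]]
  simp only [smul_eq_mul, mul_one, sum_Icc_one_sub_telescope]
  ring

lemma dotProduct_const_of_sum_eq_one {m : Type*} [Fintype m] {p : m → ℝ}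
    (hp : ∑ l, p l = 1) (a : ℝ) : p ⬝ᵥ (fun _ => a) = a := by
  simp only [dotProduct, ← sum_mul, hp, one_mul]

theorem stmt_3_general (T n d : ℕ) (α : ℝ)
    (u : ℕ → Fin d → ℝ) (v : ℕ → Fin n → ℝ)
    (hortho : ∀ j ∈ Finset.Icc 1 (T + 1), ∀ k ∈ Finset.Icc 1 (T + 1),
      u j ⬝ᵥ u k = if j = k then 1 else 0)
    (hv0 : ∀ l, v 0 l = α)
    (A : Matrix (Fin n) (Fin d) ℝ)
    (hA : ∀ l i, A l i =
      (∑ j ∈ Finset.Icc 1 T, (v (j - 1) l - v j l) * u j i) + v T l * u (T + 1) i)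
    (w : Fin d → ℝ)
    (hw : ∀ i, w i = (1 / Real.sqrt (T + 1)) * ∑ t ∈ Finset.Icc 1 (T + 1), u t i) :
    Real.sqrt (∑ i, w i ^ 2) = 1 ∧
    (∀ l, A.mulVec w l = α / Real.sqrt (T + 1)) ∧
    ∃ w' : Fin d → ℝ, Real.sqrt (∑ i, w' i ^ 2) ≤ 1 ∧
      ∀ p : Fin n → ℝ, (∀ l, 0 ≤ p l) → (∑ l, p l = 1) →
        α / Real.sqrt (T + 1) ≤ p ⬝ᵥ A.mulVec w' := by
  have hw_eq : w = (1 / Real.sqrt (T + 1)) • ∑ t ∈ Icc 1 (T + 1), u t :=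
    funext fun i => by simp [hw, Finset.sum_apply]
  have hnorm : ∑ i, w i ^ 2 = 1 := by
    have hsq : Real.sqrt (T + 1) ^ 2 = T + 1 := Real.sq_sqrt (by positivity)
    calc ∑ i, w i ^ 2 = w ⬝ᵥ w := by simp only [dotProduct, sq]
      _ = (1 / Real.sqrt (T + 1)) ^ 2 * (T + 1) := by
        rw [hw_eq, smul_dotProduct, dotProduct_smul, sum_dotProduct_sum_of_orthonormal hortho]
        simp only [Nat.card_Icc, smul_eq_mul]
        push_cast
        ring
      _ = 1 := by rw [div_pow, hsq]; field_simp
  have hAw : ∀ l, A.mulVec w l = α / Real.sqrt (T + 1) := by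
    intro l
    have hrow : (fun i => A l i) =
        ∑ j ∈ Icc 1 T, (v (j - 1) l - v j l) • u j + v T l • u (T + 1) :=
      funext fun i => by simp [hA, Finset.sum_apply]
    rw [mulVec, hrow, hw_eq, dotProduct_smul,
      telescoping_combination_dotProduct_sum hortho (fun j => v j l), hv0, smul_eq_mul]
    ring
  refine ⟨by rw [hnorm, Real.sqrt_one], hAw, w, by rw [hnorm, Real.sqrt_one], ?_⟩
  intro p _ hp
  rw [show A.mulVec w = fun _ => α / Real.sqrt (T + 1) from funext hAw,
    dotProduct_const_of_sum_eq_one hp]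

theorem stmt_3 (T n d : ℕ) (hT : 1 ≤ T) (α : ℝ) (hα : 0 < α)
    (u : ℕ → Fin d → ℝ) (v : ℕ → Fin n → ℝ)
    (hortho : ∀ j ∈ Finset.Icc 1 (T + 1), ∀ k ∈ Finset.Icc 1 (T + 1),
      u j ⬝ᵥ u k = if j = k then 1 else 0)
    (hv0 : ∀ l, v 0 l = α)
    (A : Matrix (Fin n) (Fin d) ℝ)
    (hA : ∀ l i, A l i =
      (∑ j ∈ Finset.Icc 1 T, (v (j - 1) l - v j l) * u j i) + v T l * u (T + 1) i)
    (w : Fin d → ℝ)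
    (hw : ∀ i, w i = (1 / Real.sqrt (T + 1)) * ∑ t ∈ Finset.Icc 1 (T + 1), u t i) :
    Real.sqrt (∑ i, w i ^ 2) = 1 ∧
    (∀ l, A.mulVec w l = α / Real.sqrt (T + 1)) ∧
    ∃ w' : Fin d → ℝ, Real.sqrt (∑ i, w' i ^ 2) ≤ 1 ∧
      ∀ p : Fin n → ℝ, (∀ l, 0 ≤ p l) → (∑ l, p l = 1) →
        α / Real.sqrt (T + 1) ≤ p ⬝ᵥ A.mulVec w' :=
  stmt_3_general T n d α u v hortho hv0 A hA w hw
end
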